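/- arXiv:1411.5410 — 2 statements merged into one kernel-verified Lean document; each statement's English description precedes it below -/
import Mathlib

section
/- Naive residual caching is unsound for stable model counting: there exists an ASP-SAT program P and a partial assignment θ such that the residual of P's clauses with respect to θ is empty, yet not every extension of θ to the remaining variables is a stable model of P. Concretely, for the program with founded variables {a,b}, standard variable {s}, and rules {a ← b, b ← a, a ← s}, the assignment θ = {a, b} satisfies (as implications) all rules, but the extension {a, b, ¬s} is not a stable model. -/
/-- A set `M` satisfies a positive rule `(a, B)` iff `B ⊆ M → a ∈ M`. -/
def Satisfies {V : Type*} (R : Set (V × Set V)) (M : Set V) : Prop :=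
  ∀ r ∈ R, r.2 ⊆ M → r.1 ∈ M

/-- The least model of a set of positive rules. -/
def Least {V : Type*} (R : Set (V × Set V)) : Set V :=
  {v | ∀ M : Set V, Satisfies R M → v ∈ M}

/-- Founded variables: `0` stands for `a` and `1` for `b`; the standard variable
`s` is handled separately. The reduct of the program `{a ← b, b ← a, a ← s}`
w.r.t. an assignment giving the standard variable `s` the value `s`: the rules
`a ← b` and `b ← a` are kept, and `a ← s` becomes the fact `a` if `s` is true
and is discarded otherwise. -/
def RedEx (s : Bool) : Set (Fin 2 × Set (Fin 2)) :=
  {(0, ({1} : Set (Fin 2))), (1, ({0} : Set (Fin 2)))} ∪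
    (if s then {(0, (∅ : Set (Fin 2)))} else ∅)

/-- The rules `{a ← b, b ← a, a ← s}` hold as implications under the complete
assignment `(a, b, s)`. -/
def SatRulesEx (a b s : Bool) : Prop :=
  (b = true → a = true) ∧ (a = true → b = true) ∧ (s = true → a = true)

/-- The complete assignment `(a, b, s)` is a stable model of the program with
founded variables `{a, b}`, standard variable `s` and rules
`{a ← b, b ← a, a ← s}`: the rules hold as implications and the set of true
founded variables equals the least model of the reduct. -/
def StableEx (a b s : Bool) : Prop :=
  SatRulesEx a b s ∧
    {v : Fin 2 | if v = 0 then a = true else b = true} = Least (RedEx s)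

/-- Naive residual caching is unsound: under the partial assignment
`θ = {a, b}` every rule of the program `{a ← b, b ← a, a ← s}` is satisfied as
an implication (whatever value `s` takes, so the residual clause set is empty),
yet the extension `{a, b, ¬s}` is not a stable model of the program. -/
theorem naive_residual_unsound :
    (∀ s : Bool, SatRulesEx true true s) ∧ ¬ StableEx true true false := by
  constructor
  · intro s
    exact ⟨fun _ => rfl, fun _ => rfl, fun _ => rfl⟩
  · rintro ⟨-, h⟩
    -- 0 is in the LHS but not in Least (RedEx false), since ∅ is a model.
    have h0 : (0 : Fin 2) ∈ {v : Fin 2 | if v = 0 then (true : Bool) = true else (true : Bool) = true} := by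
      simp
    rw [h] at h0
    have := h0 (∅ : Set (Fin 2)) (by
      rintro r hr hsub
      rcases hr with hr | hr
      · rcases hr with hr | hr <;>
        · subst hr
          exact absurd (hsub rfl) (Set.notMem_empty _)
      · simp at hr)
    exact this
end

section
/- In the copy encoding, copy variables underapproximate truth: in any assignment closed under unit propagation over copy(P) in which no decisions were made on copy variables, if a copy variable v′ is true then the original founded variable v is true, and moreover v is in the least model of the residual rules with respect to the standard and negative literals of the assignment. -/
/-- An ASP-SAT program over variables of type `V`: a set of variables, a subset
of founded variables (the rest being standard), rules `a ← body` with founded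
head `a` and a body of literals (a literal is a pair of a variable and a
polarity, `true` meaning positive), and constraints given as clauses (sets of
literals). -/
structure Prog (V : Type*) where
  vars : Set V
  founded : Set V
  rules : Set (V × Set (V × Bool))
  constraints : Set (Set (V × Bool))

namespace Prog

variable {V : Type*}

/-- Negation of a literal. -/
def lneg (l : V × Bool) : V × Bool := (l.1, !l.2)

/-- The variables occurring in an assignment (a set of literals). -/
def avars (θ : Set (V × Bool)) : Set V := {v | (v, true) ∈ θ ∨ (v, false) ∈ θ}

/-- An assignment is consistent if no variable occurs with both polarities. -/
def Consistent (θ : Set (V × Bool)) : Prop :=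
  ∀ v : V, ¬ ((v, true) ∈ θ ∧ (v, false) ∈ θ)

/-- A set `M` satisfies a positive rule `(a, B)` iff `B ⊆ M → a ∈ M`. -/
def SatRules {W : Type*} (R : Set (W × Set W)) (M : Set W) : Prop :=
  ∀ r ∈ R, r.2 ⊆ M → r.1 ∈ M

/-- The least model of a set of positive rules. -/
def Least {W : Type*} (R : Set (W × Set W)) : Set W :=
  {v | ∀ M : Set W, SatRules R M → v ∈ M}

/-- The reduct of the rules of `P` w.r.t. an assignment `θ`: a rule is discarded
if a negatively occurring body variable is true in `θ` or a standard positive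
body variable is false in `θ`; the remaining rules keep only their positive
founded body atoms. -/
def reduct (P : Prog V) (θ : Set (V × Bool)) : Set (V × Set V) :=
  {p | ∃ body, (p.1, body) ∈ P.rules ∧
    (∀ v : V, (v, false) ∈ body → (v, true) ∉ θ) ∧
    (∀ v : V, (v, true) ∈ body → v ∉ P.founded → (v, false) ∉ θ) ∧
    p.2 = {v | v ∈ P.founded ∧ (v, true) ∈ body}}

/-- `θ` is a stable model of `P`: it is consistent, complete on `P.vars`,
satisfies every constraint, and its true founded variables are exactly the
least model of the reduct. -/
def StableModel (P : Prog V) (θ : Set (V × Bool)) : Prop :=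
  Consistent θ ∧ (∀ v ∈ P.vars, (v, true) ∈ θ ∨ (v, false) ∈ θ) ∧
  (∀ cl ∈ P.constraints, ∃ l ∈ cl, l ∈ θ) ∧
  (∀ v ∈ P.founded, ((v, true) ∈ θ ↔ v ∈ Least (P.reduct θ)))

/-- `J₀(θ)`: the negative literals of `θ` together with its positive standard
literals. -/
def J0 (P : Prog V) (θ : Set (V × Bool)) : Set (V × Bool) :=
  {l ∈ θ | l.2 = false ∨ l.1 ∉ P.founded}

/-- The residual of a set of rules w.r.t. a partial assignment `J` (treating a
rule as its clause): a rule is discarded if its head is true in `J` or some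
body literal is false in `J`; otherwise the body literals fixed true by `J`
are removed. -/
def residualRules (R : Set (V × Set (V × Bool))) (J : Set (V × Bool)) :
    Set (V × Set (V × Bool)) :=
  {p | ∃ body, (p.1, body) ∈ R ∧ (p.1, true) ∉ J ∧
    (∀ l ∈ body, lneg l ∉ J) ∧ p.2 = {l ∈ body | l ∉ J}}

/-- The residual of a set of clauses w.r.t. a partial assignment `θ`: satisfied
clauses are discarded and false literals are deleted from the rest. -/
def residualClauses (C : Set (Set (V × Bool))) (θ : Set (V × Bool)) :
    Set (Set (V × Bool)) :=
  {d | ∃ cl ∈ C, (∀ l ∈ cl, l ∉ θ) ∧ d = {l ∈ cl | lneg l ∉ θ}}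

/-- The positive founded part of a set of rules: the rules whose body consists
solely of positive founded literals, as positive rules. -/
def posPart (P : Prog V) (R : Set (V × Set (V × Bool))) : Set (V × Set V) :=
  {p | ∃ body, (p.1, body) ∈ R ∧ (∀ l ∈ body, l.2 = true ∧ l.1 ∈ P.founded) ∧
    p.2 = {v | (v, true) ∈ body}}

/-- The justified assignment `JA(P, θ)`: `J₀(θ)` together with those positive
founded literals of `θ` implied from `J₀(θ)` using the rules of `P`. -/
def JA (P : Prog V) (θ : Set (V × Bool)) : Set (V × Bool) :=
  P.J0 θ ∪ {l | l.2 = true ∧ l.1 ∈ P.founded ∧ l ∈ θ ∧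
    l.1 ∈ Least (P.posPart (residualRules P.rules (P.J0 θ)))}

/-- The variables occurring in a set of rules. -/
def ruleVars (R : Set (V × Set (V × Bool))) : Set V :=
  {v | ∃ p ∈ R, v = p.1 ∨ ∃ b : Bool, (v, b) ∈ p.2}

/-- The variables occurring in a set of clauses. -/
def clauseVars (C : Set (Set (V × Bool))) : Set V :=
  {v | ∃ cl ∈ C, ∃ b : Bool, (v, b) ∈ cl}

/-- The justified residual program `P||θ = (W, S, D)` where, with `J = JA(P,θ)`
and `U = vars(θ) \ vars(J)`, we set `S = R|_J`,
`D = C|_θ ∪ { unit clause u | u ∈ U }` and `W = vars(S) ∪ vars(D)`. -/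
def justRes (P : Prog V) (θ : Set (V × Bool)) : Prog V :=
  let J := P.JA θ
  let U := avars θ \ avars J
  let S := residualRules P.rules J
  let D := residualClauses P.constraints θ ∪ {cl | ∃ u ∈ U, cl = {((u : V), true)}}
  { vars := ruleVars S ∪ clauseVars D
    founded := P.founded ∩ (ruleVars S ∪ clauseVars D)
    rules := S
    constraints := D }

end Prog

open Prog

/-- Literals over `V ⊕ V`: `Sum.inl v` is the original variable `v`,
`Sum.inr v` is its copy `v′` (a fresh standard variable). -/
abbrev CLit (V : Type*) := (V ⊕ V) × Bool

/-- The clause set of the copy transformation `copy(P)`: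
the constraints of `P`, the clausal form `a ∨ ¬body` of each rule,
for each founded variable `v` the clause `¬v′ ∨ v`, and for each rule
`a ← f₁ ∧ … ∧ fₙ ∧ sn₁ ∧ … ∧ sn_m` (with `fᵢ` the positive founded body
literals and `snⱼ` the standard or negative body literals) the clause
`a′ ∨ ¬f₁′ ∨ … ∨ ¬fₙ′ ∨ ¬sn₁ ∨ … ∨ ¬sn_m`. -/
def copyClauses {V : Type*} (P : Prog V) : Set (Set (CLit V)) :=
  {c | ∃ cl ∈ P.constraints,
      c = {q | ∃ l ∈ cl, q = ((Sum.inl l.1 : V ⊕ V), l.2)}} ∪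
  {c | ∃ p ∈ P.rules,
      c = insert ((Sum.inl p.1 : V ⊕ V), true)
        {q | ∃ l ∈ p.2, q = ((Sum.inl l.1 : V ⊕ V), !l.2)}} ∪
  {c | ∃ v ∈ P.founded,
      c = {((Sum.inr v : V ⊕ V), false), ((Sum.inl v : V ⊕ V), true)}} ∪
  {c | ∃ p ∈ P.rules,
      c = insert ((Sum.inr p.1 : V ⊕ V), true)
        ({q | ∃ l ∈ p.2, (l.2 = true ∧ l.1 ∈ P.founded) ∧
              q = ((Sum.inr l.1 : V ⊕ V), false)} ∪
         {q | ∃ l ∈ p.2, (l.2 = false ∨ l.1 ∉ P.founded) ∧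
              q = ((Sum.inl l.1 : V ⊕ V), !l.2)})}

/-- Literals derivable by unit propagation on a clause set `cls` from an
initial assignment `π₀`. -/
inductive UPDeriv {α : Type*} (cls : Set (Set (α × Bool))) (π₀ : Set (α × Bool)) :
    (α × Bool) → Prop
  | base {l} : l ∈ π₀ → UPDeriv cls π₀ l
  | unit {cl : Set (α × Bool)} {l} : cl ∈ cls → l ∈ cl →
      (∀ l' ∈ cl, l' ≠ l → UPDeriv cls π₀ (Prog.lneg l')) → UPDeriv cls π₀ l

private lemma copy_to_orig {V : Type*} (P : Prog V) (π₀ : Set (CLit V)) {v : V}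
    (hv : v ∈ P.founded)
    (h : UPDeriv (copyClauses P) π₀ ((Sum.inr v : V ⊕ V), true)) :
    UPDeriv (copyClauses P) π₀ ((Sum.inl v : V ⊕ V), true) := by
  refine UPDeriv.unit (cl := {((Sum.inr v : V ⊕ V), false), ((Sum.inl v : V ⊕ V), true)})
    ?_ (by simp) ?_
  · exact Or.inl (Or.inr ⟨v, hv, rfl⟩)
  · intro l' hl' hne
    rcases hl' with h1 | h1
    · subst h1; simpa [Prog.lneg] using h
    · simp only [Set.mem_singleton_iff] at h1
      exact absurd h1 hne

/-- Copy variables underapproximate truth: if `π` is the unit-propagation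
closure over `copy(P)` of an assignment `π₀` containing no positive copy
literals (i.e. no decisions were made on copy variables), and `π` is
consistent, then whenever a copy variable `v′` is true in `π`, the original
founded variable `v` is true in the projection `θ` and moreover `v` lies in
the least model of the residual rules w.r.t. the standard and negative
literals `J₀(θ)` of the projection. -/
theorem copy_vars_underapprox {V : Type*} (P : Prog V)
    (π₀ π : Set (CLit V)) (θ : Set (V × Bool))
    (hheads : ∀ p ∈ P.rules, p.1 ∈ P.founded)
    (h₀ : ∀ v : V, ((Sum.inr v : V ⊕ V), true) ∉ π₀)
    (hπ : π = {l | UPDeriv (copyClauses P) π₀ l})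
    (hπc : Consistent π)
    (hθ : θ = {l | ((Sum.inl l.1 : V ⊕ V), l.2) ∈ π}) :
    ∀ v : V, ((Sum.inr v : V ⊕ V), true) ∈ π →
      (v, true) ∈ θ ∧
      v ∈ Prog.Least (P.posPart (Prog.residualRules P.rules (P.J0 θ))) := by
  subst hπ hθ
  set Pi : Set (CLit V) := {l | UPDeriv (copyClauses P) π₀ l} with hPi
  set th : Set (V × Bool) := {l : V × Bool | ((Sum.inl l.1 : V ⊕ V), l.2) ∈ Pi} with hth
  have key : ∀ l : CLit V, UPDeriv (copyClauses P) π₀ l →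
      ∀ v : V, l = ((Sum.inr v : V ⊕ V), true) →
      ((Sum.inl v : V ⊕ V), true) ∈ Pi ∧
      v ∈ Prog.Least (P.posPart (Prog.residualRules P.rules (P.J0 th))) := by
    intro l hl
    induction hl with
    | base h => intro v hv; subst hv; exact absurd h (h₀ v)
    | @unit cl l hcl hmem hprem ih =>
      intro v hv; subst hv
      have hder : ((Sum.inr v : V ⊕ V), true) ∈ Pi := UPDeriv.unit hcl hmem hprem
      rcases hcl with ((hg1 | hg2) | hg3) | hg4
      · -- group 1: constraints, all literals inl
        obtain ⟨c, -, rfl⟩ := hg1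
        obtain ⟨l', -, hq⟩ := hmem
        simp at hq
      · -- group 2: rule clauses, all literals inl
        obtain ⟨p, -, rfl⟩ := hg2
        rcases hmem with hq | hq
        · simp at hq
        · obtain ⟨l', -, hq⟩ := hq; simp at hq
      · -- group 3
        obtain ⟨w, -, rfl⟩ := hg3
        rcases hmem with hq | hq <;> simp at hq
      · -- group 4: copy rule clause
        obtain ⟨p, hp, rfl⟩ := hg4
        have hv : v = p.1 := by
          rcases hmem with hq | (hq | hq)
          · simpa using hq
          · obtain ⟨l', -, hq⟩ := hq
            rw [Prod.ext_iff] at hq; simp at hq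
          · obtain ⟨l', -, hq⟩ := hq; rw [Prod.ext_iff] at hq; simp at hq
        subst hv
        have hfd : p.1 ∈ P.founded := hheads p hp
        -- claim A: positive founded body literals
        have claimA : ∀ f : V, (f, true) ∈ p.2 → f ∈ P.founded →
            ((Sum.inl f : V ⊕ V), true) ∈ Pi ∧
            f ∈ Prog.Least (P.posPart (Prog.residualRules P.rules (P.J0 th))) := by
          intro f hf hffd
          have hmem' : ((Sum.inr f : V ⊕ V), false) ∈
              insert ((Sum.inr p.1 : V ⊕ V), true)
                ({q | ∃ l ∈ p.2, (l.2 = true ∧ l.1 ∈ P.founded) ∧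
                      q = ((Sum.inr l.1 : V ⊕ V), false)} ∪
                 {q | ∃ l ∈ p.2, (l.2 = false ∨ l.1 ∉ P.founded) ∧
                      q = ((Sum.inl l.1 : V ⊕ V), !l.2)}) := by
            exact Or.inr (Or.inl ⟨(f, true), hf, ⟨rfl, hffd⟩, rfl⟩)
          have hne : ((Sum.inr f : V ⊕ V), false) ≠ ((Sum.inr p.1 : V ⊕ V), true) := by
            simp
          have := ih _ hmem' hne f (by simp [Prog.lneg])
          exact this
        -- claim B: standard/negative body literals
        have claimB : ∀ l ∈ p.2, (l.2 = false ∨ l.1 ∉ P.founded) → l ∈ th := by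
          intro l hl hcond
          have hmem' : ((Sum.inl l.1 : V ⊕ V), !l.2) ∈
              insert ((Sum.inr p.1 : V ⊕ V), true)
                ({q | ∃ l ∈ p.2, (l.2 = true ∧ l.1 ∈ P.founded) ∧
                      q = ((Sum.inr l.1 : V ⊕ V), false)} ∪
                 {q | ∃ l ∈ p.2, (l.2 = false ∨ l.1 ∉ P.founded) ∧
                      q = ((Sum.inl l.1 : V ⊕ V), !l.2)}) := by
            exact Or.inr (Or.inr ⟨l, hl, hcond, rfl⟩)
          have hne : ((Sum.inl l.1 : V ⊕ V), !l.2) ≠ ((Sum.inr p.1 : V ⊕ V), true) := by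
            simp
          have hd := hprem _ hmem' hne
          simp only [Prog.lneg, Bool.not_not] at hd
          exact hd
        -- the residual body
        have hbody' : ∀ l ∈ p.2, l ∉ P.J0 th → l.2 = true ∧ l.1 ∈ P.founded := by
          intro l hl hnJ
          by_contra hcon
          push_neg at hcon
          have hcond : l.2 = false ∨ l.1 ∉ P.founded := by
            by_cases h2 : l.2 = true
            · exact Or.inr (hcon h2)
            · exact Or.inl (Bool.not_eq_true _ ▸ by simpa using h2)
          exact hnJ ⟨claimB l hl hcond, hcond⟩
        -- consistency consequences
        have hcons : ∀ w : V, ∀ b : Bool, (w, b) ∈ th → (w, !b) ∉ th := by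
          intro w b hb hnb
          cases b
          · exact hπc (Sum.inl w) ⟨hnb, hb⟩
          · exact hπc (Sum.inl w) ⟨hb, hnb⟩
        have hleast : p.1 ∈ Prog.Least (P.posPart (Prog.residualRules P.rules (P.J0 th))) := by
          intro M hM
          have hrule : (p.1, {w : V | (w, true) ∈ {l ∈ p.2 | l ∉ P.J0 th}}) ∈
              P.posPart (Prog.residualRules P.rules (P.J0 th)) := by
            refine ⟨{l ∈ p.2 | l ∉ P.J0 th}, ?_, ?_, rfl⟩
            · refine ⟨p.2, hp, ?_, ?_, rfl⟩
              · intro hJ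
                rcases hJ.2 with h | h
                · simp at h
                · exact h hfd
              · intro l hl hJ
                have hcond := hJ.2
                have hcond' : (Prog.lneg l).2 = false ∨ (Prog.lneg l).1 ∉ P.founded := hcond
                have hmemth : Prog.lneg l ∈ th := hJ.1
                -- contradiction with body literal derivations
                by_cases hc : l.2 = true ∧ l.1 ∈ P.founded
                · -- positive founded: (l.1, false) ∈ th contradicts (inl l.1, true) ∈ Pi
                  have hA := claimA l.1 (by rw [← hc.1]; exact hl) hc.2
                  have : (l.1, true) ∈ th := hA.1
                  have : (l.1, false) ∈ th := by
                    have : Prog.lneg l = (l.1, false) := by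
                      simp [Prog.lneg, hc.1]
                    rwa [this] at hmemth
                  exact hcons l.1 true hA.1 (by simpa using this)
                · push_neg at hc
                  have hcond2 : l.2 = false ∨ l.1 ∉ P.founded := by
                    by_cases h2 : l.2 = true
                    · exact Or.inr (hc h2)
                    · exact Or.inl (by simpa using h2)
                  have hB := claimB l hl hcond2
                  have : (l.1, !l.2) ∈ th := hmemth
                  exact hcons l.1 l.2 (by simpa using hB) this
            · intro l hl
              exact hbody' l hl.1 hl.2
          refine hM _ hrule ?_
          intro w hw
          simp only [Set.mem_setOf_eq] at hw
          have h1 : (w, true) ∈ p.2 := hw.1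
          have h2 := hbody' _ hw.1 hw.2
          exact (claimA w h1 h2.2).2 M hM
        exact ⟨copy_to_orig P π₀ hfd hder, hleast⟩
  intro v hv
  exact key _ hv v rfl
end
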